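/- arXiv:2303.14985 — 6 statements merged into one kernel-verified Lean document; each statement's English description precedes it below -/
import Mathlib

section
/- Let l₁, l₂ be linear forms with ⟨l₁,l₂⟩ = 0 (orthogonal) and d ≥ 2. Then l₂^d is orthogonal under the Bombieri–Weyl form to the tangent space {l₁^{d-1}v : v linear} of the Veronese cone at l₁^d; consequently l₁^d is a critical rank-one approximation of l₁^d + l₂^d. -/
/-- The complex bilinear extension of the standard Euclidean inner product on `ℂ^n`. -/
noncomputable def dot {n : ℕ} (x y : Fin n → ℂ) : ℂ := ∑ i, x i * y i

/-- The linear form `u₁ x₁ + ⋯ + uₙ xₙ` associated to a vector `u ∈ ℂ^n`. -/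
noncomputable def lin {n : ℕ} (u : Fin n → ℂ) : MvPolynomial (Fin n) ℂ :=
  ∑ i, MvPolynomial.C (u i) * MvPolynomial.X i

/-- If `l₁ ⟂ l₂` then `l₂^d` is Bombieri–Weyl orthogonal to the tangent space of the
Veronese cone at `l₁^d`; consequently `l₁^d` is a critical rank-one approximation
of `l₁^d + l₂^d`. -/
theorem orthogonal_pair_critical (n d : ℕ) (hd : 2 ≤ d)
    (BW : MvPolynomial (Fin n) ℂ →ₗ[ℂ] MvPolynomial (Fin n) ℂ →ₗ[ℂ] ℂ)
    (hBW : ∀ u v w : Fin n → ℂ,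
      BW (lin u ^ (d - 1) * lin w) (lin v ^ d) = (dot u v) ^ (d - 1) * dot w v)
    (l₁ l₂ : Fin n → ℂ) (h12 : dot l₁ l₂ = 0) :
    (∀ v : Fin n → ℂ, BW (lin l₁ ^ (d - 1) * lin v) (lin l₂ ^ d) = 0) ∧
    (∀ v : Fin n → ℂ,
      BW (lin l₁ ^ (d - 1) * lin v) ((lin l₁ ^ d + lin l₂ ^ d) - lin l₁ ^ d) = 0) := by
  have key : ∀ v : Fin n → ℂ, BW (lin l₁ ^ (d - 1) * lin v) (lin l₂ ^ d) = 0 := by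
    intro v
    rw [hBW, h12, zero_pow (by omega), zero_mul]
  refine ⟨key, fun v => ?_⟩
  rw [add_sub_cancel_left]
  exact key v
end

section
/- Conversely, if l₁, l₂ are linear forms, d ≥ 2, l₁ is not isotropic, and l₂^d is orthogonal under the Bombieri–Weyl form to l₁^{d-1}v for all linear forms v, then ⟨l₁,l₂⟩ = 0. -/
/-- Conversely, if `l₁` is not isotropic and `l₂^d` is Bombieri–Weyl orthogonal to
`l₁^{d-1} v` for all linear forms `v`, then `⟨l₁, l₂⟩ = 0`. -/
theorem critical_implies_orthogonal (n d : ℕ) (hd : 2 ≤ d)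
    (BW : MvPolynomial (Fin n) ℂ →ₗ[ℂ] MvPolynomial (Fin n) ℂ →ₗ[ℂ] ℂ)
    (hBW : ∀ u v w : Fin n → ℂ,
      BW (lin u ^ (d - 1) * lin w) (lin v ^ d) = (dot u v) ^ (d - 1) * dot w v)
    (l₁ l₂ : Fin n → ℂ) (hni : dot l₁ l₁ ≠ 0)
    (hperp : ∀ v : Fin n → ℂ, BW (lin l₁ ^ (d - 1) * lin v) (lin l₂ ^ d) = 0) :
    dot l₁ l₂ = 0 := by
  have h := (hperp l₁).symm.trans (hBW l₁ l₂ l₁)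
  have : (dot l₁ l₂) ^ d = 0 := by
    have hd1 : d - 1 + 1 = d := by omega
    rw [← hd1, pow_succ]
    exact h.symm
  exact pow_eq_zero_iff (show d ≠ 0 by omega) |>.mp this
end

section
/- Let f = Σᵢ₌₁^r lᵢ^d with lᵢ pairwise orthogonal nonzero linear forms, none isotropic, and let l be a linear form with ⟨f, l^{d-1}v⟩_BW = 0 for all linear forms v. Then ⟨l, lᵢ⟩ = 0 for all i. -/
/-- If `f = Σᵢ lᵢ^d` with `lᵢ` pairwise orthogonal, nonzero and non-isotropic, and
`f` is Bombieri–Weyl orthogonal to `l^{d-1} v` for all linear `v`, then `l ⟂ lᵢ`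
for all `i`. -/
theorem perp_tangent_implies_orthogonal (n d r : ℕ) (hd : 2 ≤ d)
    (BW : MvPolynomial (Fin n) ℂ →ₗ[ℂ] MvPolynomial (Fin n) ℂ →ₗ[ℂ] ℂ)
    (hBW : ∀ u v w : Fin n → ℂ,
      BW (lin u ^ d) (lin v ^ (d - 1) * lin w) = (dot u v) ^ (d - 1) * dot u w)
    (l : Fin r → Fin n → ℂ)
    (hne : ∀ i, l i ≠ 0)
    (hni : ∀ i, dot (l i) (l i) ≠ 0)
    (horth : ∀ i j, i ≠ j → dot (l i) (l j) = 0)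
    (l₀ : Fin n → ℂ)
    (hperp : ∀ v : Fin n → ℂ,
      BW (∑ i, lin (l i) ^ d) (lin l₀ ^ (d - 1) * lin v) = 0) :
    ∀ i, dot l₀ (l i) = 0 := by
  intro i
  have h := hperp (l i)
  rw [map_sum] at h
  simp only [LinearMap.sum_apply, hBW] at h
  rw [Finset.sum_eq_single i] at h
  · have hpow : dot (l i) l₀ ^ (d - 1) = 0 := by
      rcases mul_eq_zero.mp h with h' | h'
      · exact h'
      · exact absurd h' (hni i)
    have : dot (l i) l₀ = 0 := pow_eq_zero_iff (by omega) |>.mp hpow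
    have hcomm : dot l₀ (l i) = dot (l i) l₀ := by
      simp [dot, mul_comm]
    rw [hcomm, this]
  · intro j _ hj
    rw [horth j i hj, mul_zero]
  · intro hi
    exact absurd (Finset.mem_univ i) hi
end

section
/- If B is a rank-one n×n matrix of the form σ u vᵀ with Av = σu and Aᵀu = σv (σ ≠ 0, u,v unit vectors), then A − B is orthogonal, with respect to the Frobenius (trace) inner product, to the tangent space of the rank-one matrix variety at B, which is {u wᵀ + z vᵀ : w, z ∈ ℝⁿ}. -/
/-- The standard Euclidean inner product on `ℝ^n`. -/
def dotR {n : ℕ} (x y : Fin n → ℝ) : ℝ := ∑ i, x i * y i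

/-- If `B = σ u vᵀ` with `(u, v, σ)` a singular triple of `A`, then `A - B` is
Frobenius-orthogonal to the tangent space `{u wᵀ + z vᵀ}` of the rank-one matrix
variety at `B`. -/
theorem residual_perp_tangent (n : ℕ) (A : Matrix (Fin n) (Fin n) ℝ)
    (σ : ℝ) (u v : Fin n → ℝ)
    (hσ : σ ≠ 0) (hu : dotR u u = 1) (hv : dotR v v = 1)
    (hAv : A.mulVec v = σ • u) (hAu : A.transpose.mulVec u = σ • v) :
    ∀ w z : Fin n → ℝ,
      Matrix.trace ((A - σ • Matrix.vecMulVec u v).transpose *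
        (Matrix.vecMulVec u w + Matrix.vecMulVec z v)) = 0 := by
  intro w z
  have hu' : ∑ i, u i * u i = 1 := hu
  have hv' : ∑ i, v i * v i = 1 := hv
  have hAu' : ∀ j, ∑ i, A i j * u i = σ * v j := by
    intro j
    have := congrFun hAu j
    simpa [Matrix.mulVec, Matrix.transpose, dotProduct, mul_comm] using this
  have hAv' : ∀ i, ∑ j, A i j * v j = σ * u i := by
    intro i
    have := congrFun hAv i
    simpa [Matrix.mulVec, dotProduct] using this
  simp only [Matrix.trace, Matrix.diag, Matrix.mul_apply, Matrix.sub_apply,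
    Matrix.add_apply, Matrix.transpose_apply, Matrix.smul_apply,
    Matrix.vecMulVec_apply, smul_eq_mul]
  have key : ∀ j, ∑ i, (A i j - σ * (u i * v j)) * (u i * w j + z i * v j)
      = v j * (∑ i, A i j * z i) - σ * (v j * v j) * (∑ i, u i * z i) := by
    intro j
    have e : ∀ i, (A i j - σ * (u i * v j)) * (u i * w j + z i * v j)
        = (A i j * u i) * w j + (A i j * z i) * v j
          - σ * (v j * w j) * (u i * u i) - σ * (v j * v j) * (u i * z i) := by
      intro i; ring
    simp only [e, Finset.sum_sub_distrib, Finset.sum_add_distrib,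
      ← Finset.sum_mul, ← Finset.mul_sum]
    rw [hAu' j, hu']
    ring
  simp only [key, Finset.sum_sub_distrib]
  have t1 : ∑ j, v j * ∑ i, A i j * z i = σ * ∑ i, u i * z i := by
    simp only [Finset.mul_sum]
    rw [Finset.sum_comm]
    have : ∀ i, ∑ j, v j * (A i j * z i) = σ * (u i * z i) := by
      intro i
      have : ∑ j, v j * (A i j * z i) = (∑ j, A i j * v j) * z i := by
        rw [Finset.sum_mul]; exact Finset.sum_congr rfl (fun j _ => by ring)
      rw [this, hAv' i]; ring
    simp only [this, ← Finset.mul_sum]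
  have t2 : ∑ j, σ * (v j * v j) * (∑ i, u i * z i) = σ * ∑ i, u i * z i := by
    rw [← Finset.sum_mul]
    have : ∑ j, σ * (v j * v j) = σ := by
      rw [← Finset.mul_sum, hv', mul_one]
    rw [this, Finset.mul_sum]
  rw [t1, t2, sub_self]
end

section
/- Let T = Σ_{i=1}^m x₁^i⊗⋯⊗x_p^i be a weakly orthogonally decomposable tensor, meaning x_j^k ⟂ x_j^l (i.e., ⟨x_j^k, x_j^l⟩_j = 0) for all k ≠ l and all j. Then for each index i, the partial sum T − x₁^i⊗⋯⊗x_p^i is orthogonal under the Bombieri–Weyl form to the tangent space of the rank-one variety at x₁^i⊗⋯⊗x_p^i; hence each term is a critical rank-one approximation of T. -/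
open scoped TensorProduct

/-- For a weakly orthogonally decomposable tensor `T = Σᵢ x₁ⁱ⊗⋯⊗x_pⁱ` (the factors
of distinct terms being orthogonal in every slot), each term is a critical rank-one
approximation of `T`: `T` minus that term is Bombieri–Weyl orthogonal to the
tangent space of the rank-one variety at the term. -/
theorem wodeco_terms_are_critical
    (p m : ℕ) (hp : 2 ≤ p) (nn : Fin p → ℕ)
    (BW : (⨂[ℂ] i, (Fin (nn i) → ℂ)) →ₗ[ℂ] (⨂[ℂ] i, (Fin (nn i) → ℂ)) →ₗ[ℂ] ℂ)
    (hBW : ∀ a b : (i : Fin p) → Fin (nn i) → ℂ,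
      BW (PiTensorProduct.tprod ℂ a) (PiTensorProduct.tprod ℂ b) =
        ∏ i, dot (a i) (b i))
    (x : Fin m → (i : Fin p) → Fin (nn i) → ℂ)
    (horth : ∀ (j : Fin p) (k l : Fin m), k ≠ l → dot (x k j) (x l j) = 0) :
    ∀ (i : Fin m) (k : Fin p) (w : Fin (nn k) → ℂ),
      BW ((∑ i', PiTensorProduct.tprod ℂ (x i')) - PiTensorProduct.tprod ℂ (x i))
        (PiTensorProduct.tprod ℂ (Function.update (x i) k w)) = 0 := by
  intro i k w
  rw [map_sub, LinearMap.sub_apply, map_sum, LinearMap.sum_apply]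
  have key : ∀ i' : Fin m, i' ≠ i →
      BW (PiTensorProduct.tprod ℂ (x i'))
        (PiTensorProduct.tprod ℂ (Function.update (x i) k w)) = 0 := by
    intro i' hi'
    rw [hBW]
    -- pick a slot j ≠ k
    have hplt : (1 : ℕ) < p := hp
    haveI : Nontrivial (Fin p) := Fin.nontrivial_iff_two_le.mpr hp
    obtain ⟨j, hj⟩ := exists_ne k
    apply Finset.prod_eq_zero (Finset.mem_univ j)
    rw [Function.update_of_ne hj]
    exact horth j i' i hi'
  rw [Finset.sum_eq_single i (fun b _ hb => key b hb) (fun h => absurd (Finset.mem_univ i) h)]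
  ring
end

section
/- Let f = l₁^d + l₂^d where l₁, l₂ are linear forms with l₂ ≠ 0, d ≥ 2, and ⟨f, l₁^{d-1}v⟩_BW = ⟨l₁^d, l₁^{d-1}v⟩_BW for all linear v (i.e., l₂^d ⟂ T_{l₁^d}X). Then ⟨l₁, l₂⟩ = 0; that is, every tensor in DL₂ for the Veronese cone is weakly orthogonally decomposable of rank ≤ 2. -/
/-- Every element of `DL₂` for the Veronese cone is weakly orthogonally decomposable
of rank at most 2: if `l₂^d` is orthogonal to the tangent space at `l₁^d` (i.e.
`⟨f, l₁^{d-1}v⟩ = ⟨l₁^d, l₁^{d-1}v⟩` for all `v`, where `f = l₁^d + l₂^d`), and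
`l₂` is non-isotropic or some `v` with `⟨v, l₂⟩ ≠ 0` exists, then `⟨l₁, l₂⟩ = 0`. -/
theorem DL2_weakly_odeco (n d : ℕ) (hd : 2 ≤ d)
    (BW : MvPolynomial (Fin n) ℂ →ₗ[ℂ] MvPolynomial (Fin n) ℂ →ₗ[ℂ] ℂ)
    (hBW : ∀ u v w : Fin n → ℂ,
      BW (lin u ^ (d - 1) * lin w) (lin v ^ d) = (dot u v) ^ (d - 1) * dot w v)
    (l₁ l₂ : Fin n → ℂ)
    (hcrit : ∀ v : Fin n → ℂ,
      BW (lin l₁ ^ (d - 1) * lin v) (lin l₁ ^ d + lin l₂ ^ d) =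
        BW (lin l₁ ^ (d - 1) * lin v) (lin l₁ ^ d))
    (hnd : dot l₂ l₂ ≠ 0 ∨ ∃ v : Fin n → ℂ, dot v l₂ ≠ 0) :
    dot l₁ l₂ = 0 := by
  have key : ∀ v : Fin n → ℂ, (dot l₁ l₂) ^ (d - 1) * dot v l₂ = 0 := by
    intro v
    have h := hcrit v
    rw [map_add] at h
    have h2 : BW (lin l₁ ^ (d - 1) * lin v) (lin l₂ ^ d) = 0 := add_eq_left.mp h
    rw [hBW l₁ l₂ v] at h2
    exact h2
  have hpow : (dot l₁ l₂) ^ (d - 1) = 0 := by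
    rcases hnd with h | ⟨v, hv⟩
    · have := key l₂
      exact (mul_eq_zero.mp this).resolve_right h
    · exact (mul_eq_zero.mp (key v)).resolve_right hv
  exact pow_eq_zero_iff (by omega : d - 1 ≠ 0) |>.mp hpow
end
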